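/- For any finite simple graph G, with E_c(G) the set of partitions ∼ of V(G) into connected classes, the totally acyclic partial orientations of G are in bijection with pairs consisting of a connected partition ∼ ∈ E_c(G) together with an acyclic orientation of the contraction G/∼, so that |PO_tac(G)| = Σ_{∼ ∈ E_c(G)} |{acyclic orientations of G/∼}|. -/

import Mathlib

/-- A partial orientation (mixed graph) over the simple graph `G`: some edges of `G`
are given a direction (`dir`), the others stay undirected. -/
structure PartialOrientation {V : Type} (G : SimpleGraph V) where
  dir : V → V → Prop
  dir_adj : ∀ v w, dir v w → G.Adj v w
  not_both : ∀ v w, dir v w → ¬ dir w v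

/-- The undirected part `gr_0(H)` of a partial orientation: the edges of `G` left
undirected in `H`. -/
def gr0 {V : Type} {G : SimpleGraph V} (H : PartialOrientation G) : SimpleGraph V where
  Adj v w := G.Adj v w ∧ ¬ H.dir v w ∧ ¬ H.dir w v
  symm := ⟨fun v w h => ⟨h.1.symm, h.2.2, h.2.1⟩⟩
  loopless := ⟨fun v h => G.ne_of_adj h.1 rfl⟩

/-- A partial orientation is totally acyclic if there is no closed walk, traversing
undirected edges in either direction and arcs in their direction, using at least one
arc. -/
def TotallyAcyclic {V : Type} {G : SimpleGraph V} (H : PartialOrientation G) : Prop :=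
  ∀ v w, H.dir v w → ¬ Relation.ReflTransGen (fun a b => G.Adj a b ∧ ¬ H.dir b a) w v

/-- Every class of the setoid `s` induces a connected subgraph of `G`. -/
def ConnClasses {V : Type} (G : SimpleGraph V) (s : Setoid V) : Prop :=
  ∀ x y, s.r x y →
    Relation.ReflTransGen (fun a b => G.Adj a b ∧ s.r x a ∧ s.r x b) x y

/-- The contraction `G/∼` of `G` along a setoid: the simple graph on the classes, two
distinct classes being adjacent when some edge of `G` joins them. -/
def contractGraph {V : Type} (G : SimpleGraph V) (s : Setoid V) :
    SimpleGraph (Quotient s) where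
  Adj C D := C ≠ D ∧ ∃ x y : V, Quotient.mk s x = C ∧ Quotient.mk s y = D ∧ G.Adj x y
  symm := ⟨fun C D h => ⟨h.1.symm, by obtain ⟨x, y, hx, hy, hxy⟩ := h.2; exact ⟨y, x, hy, hx, hxy.symm⟩⟩⟩
  loopless := ⟨fun C h => h.1 rfl⟩

/-- An orientation of a simple graph: each edge gets exactly one direction. -/
structure GraphOrientation {V : Type} (G : SimpleGraph V) where
  rel : V → V → Prop
  sub : ∀ v w, rel v w → G.Adj v w
  exactlyOne : ∀ v w, G.Adj v w → (rel v w ↔ ¬ rel w v)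

/-- An orientation is acyclic if it has no directed cycle. -/
def AcyclicO {V : Type} {G : SimpleGraph V} (O : GraphOrientation G) : Prop :=
  ∀ v w, O.rel v w → ¬ Relation.ReflTransGen O.rel w v


-- ===== Auxiliary material =====

namespace CTAPO

variable {V : Type} {G : SimpleGraph V}

/-- The walk relation used in `TotallyAcyclic`. -/
def Rw (H : PartialOrientation G) : V → V → Prop :=
  fun a b => G.Adj a b ∧ ¬ H.dir b a

lemma PO_ext {H₁ H₂ : PartialOrientation G} (h : H₁.dir = H₂.dir) : H₁ = H₂ := by
  cases H₁; cases H₂; cases h; rfl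

lemma GO_ext {O₁ O₂ : GraphOrientation G} (h : O₁.rel = O₂.rel) : O₁ = O₂ := by
  cases O₁; cases O₂; cases h; rfl

lemma gr0_rtg_Rw {H : PartialOrientation G} {a b : V}
    (h : Relation.ReflTransGen (gr0 H).Adj a b) :
    Relation.ReflTransGen (Rw H) a b :=
  Relation.ReflTransGen.mono (r := (gr0 H).Adj) (p := Rw H) (fun _ _ hab => ⟨hab.1, hab.2.2⟩) _ _ h

/-- The mixed graph built from a setoid and an orientation of the contraction. -/
def mixedDir (s : Setoid V) (O : GraphOrientation (contractGraph G s)) :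
    PartialOrientation G where
  dir v w := G.Adj v w ∧ O.rel (Quotient.mk s v) (Quotient.mk s w)
  dir_adj v w h := h.1
  not_both v w h h' := by
    have hadj := O.sub _ _ h.2
    exact ((O.exactlyOne _ _ hadj).mp h.2) h'.2

lemma mixed_step (s : Setoid V) (O : GraphOrientation (contractGraph G s))
    {a b : V} (h : Rw (mixedDir s O) a b) :
    Quotient.mk s a = Quotient.mk s b ∨ O.rel (Quotient.mk s a) (Quotient.mk s b) := by
  by_cases hq : Quotient.mk s a = Quotient.mk s b
  · exact Or.inl hq
  · right
    have hadj : (contractGraph G s).Adj (Quotient.mk s a) (Quotient.mk s b) :=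
      ⟨hq, a, b, rfl, rfl, h.1⟩
    have hnb : ¬ O.rel (Quotient.mk s b) (Quotient.mk s a) := by
      intro hr
      exact h.2 ⟨h.1.symm, hr⟩
    exact (O.exactlyOne _ _ hadj).mpr hnb

lemma mixed_TA (s : Setoid V) (O : GraphOrientation (contractGraph G s))
    (hO : AcyclicO O) : TotallyAcyclic (mixedDir s O) := by
  intro v w hd hrt
  have hrel : O.rel (Quotient.mk s v) (Quotient.mk s w) := hd.2
  have lift : ∀ b, Relation.ReflTransGen (Rw (mixedDir s O)) w b →
      Relation.ReflTransGen O.rel (Quotient.mk s w) (Quotient.mk s b) := by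
    intro b h
    induction h with
    | refl => exact Relation.ReflTransGen.refl
    | tail _ hstep ih =>
        rcases mixed_step s O hstep with heq | hrel'
        · exact heq ▸ ih
        · exact ih.tail hrel'
  exact hO _ _ hrel (lift v hrt)

lemma mixed_setoid_char (s : Setoid V) (hs : ConnClasses G s)
    (O : GraphOrientation (contractGraph G s)) {x y : V} :
    s.r x y ↔ Relation.ReflTransGen (gr0 (mixedDir s O)).Adj x y := by
  constructor
  · intro h
    refine Relation.ReflTransGen.mono (p := (gr0 (mixedDir s O)).Adj) (fun a b hab => ?_) _ _ (hs x y h)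
    have hrab : s.r a b := s.trans (s.symm hab.2.1) hab.2.2
    have hq : Quotient.mk s a = Quotient.mk s b := Quotient.sound hrab
    have hno : ∀ C : Quotient s, ¬ O.rel C C := fun C hC => (O.sub _ _ hC).1 rfl
    exact ⟨hab.1, fun hd => hno _ (hq ▸ hd.2), fun hd => hno _ (hq ▸ hd.2)⟩
  · intro h
    induction h with
    | refl => exact s.refl x
    | @tail b c _ hstep ih =>
        have hq : Quotient.mk s b = Quotient.mk s c := by
          by_contra hne
          have hadj : (contractGraph G s).Adj (Quotient.mk s b) (Quotient.mk s c) :=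
            ⟨hne, b, c, rfl, rfl, hstep.1⟩
          have h1 : ¬ O.rel (Quotient.mk s b) (Quotient.mk s c) :=
            fun hr => hstep.2.1 ⟨hstep.1, hr⟩
          have h2 : ¬ O.rel (Quotient.mk s c) (Quotient.mk s b) :=
            fun hr => hstep.2.2 ⟨hstep.1.symm, hr⟩
          exact h1 ((O.exactlyOne _ _ hadj).mpr h2)
        exact s.trans ih (Quotient.exact hq)

/-- The bijection from pairs to totally acyclic partial orientations. -/
noncomputable def toPO (G : SimpleGraph V)
    (x : Σ s : {s : Setoid V // ConnClasses G s},
        {O : GraphOrientation (contractGraph G s.1) // AcyclicO O}) :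
    {H : PartialOrientation G // TotallyAcyclic H} :=
  ⟨mixedDir x.1.1 x.2.1, mixed_TA x.1.1 x.2.1 x.2.2⟩

lemma toPO_injective (G : SimpleGraph V) : Function.Injective (toPO G) := by
  rintro ⟨⟨s₁, hs₁⟩, ⟨O₁, hO₁⟩⟩ ⟨⟨s₂, hs₂⟩, ⟨O₂, hO₂⟩⟩ h
  have hmix : mixedDir s₁ O₁ = mixedDir (G := G) s₂ O₂ := congrArg Subtype.val h
  have hseq : s₁ = s₂ := by
    apply Setoid.ext
    intro x y
    rw [mixed_setoid_char s₁ hs₁ O₁, mixed_setoid_char s₂ hs₂ O₂, hmix]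
  subst hseq
  have hrel : O₁.rel = O₂.rel := by
    funext C D
    apply propext
    have hdir : ∀ v w, (mixedDir s₁ O₁).dir v w ↔ (mixedDir s₁ O₂).dir v w := by
      intro v w; rw [hmix]
    constructor
    · intro h1
      obtain ⟨hne, a, b, ha, hb, hab⟩ := O₁.sub _ _ h1
      have : (mixedDir s₁ O₁).dir a b := ⟨hab, by rw [ha, hb]; exact h1⟩
      have h2 := (hdir a b).mp this
      rw [← ha, ← hb]
      exact h2.2
    · intro h1
      obtain ⟨hne, a, b, ha, hb, hab⟩ := O₂.sub _ _ h1
      have : (mixedDir s₁ O₂).dir a b := ⟨hab, by rw [ha, hb]; exact h1⟩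
      have h2 := (hdir a b).mpr this
      rw [← ha, ← hb]
      exact h2.2
  have : O₁ = O₂ := GO_ext hrel
  subst this
  rfl

lemma toPO_surjective (G : SimpleGraph V) : Function.Surjective (toPO G) := by
  rintro ⟨H, hTA⟩
  -- the setoid of connected components of gr0 H
  set s : Setoid V := ⟨Relation.ReflTransGen (gr0 H).Adj,
    ⟨fun _ => Relation.ReflTransGen.refl,
     fun h => by haveI := (gr0 H).symm; exact Std.Symm.symm _ _ h,
     fun h h' => h.trans h'⟩⟩ with hs_def
  have hsr : ∀ x y, s.r x y ↔ Relation.ReflTransGen (gr0 H).Adj x y := fun _ _ => Iff.rfl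
  have hclassRw : ∀ {x y : V}, s.r x y → Relation.ReflTransGen (Rw H) x y :=
    fun h => gr0_rtg_Rw h
  have hs : ConnClasses G s := by
    intro x y hxy
    rw [hsr] at hxy
    induction hxy with
    | refl => exact Relation.ReflTransGen.refl
    | @tail b c hpre hstep ih =>
        have hxb : s.r x b := hpre
        have hxc : s.r x c := s.trans hxb (Relation.ReflTransGen.single hstep)
        exact ih.tail ⟨hstep.1, hxb, hxc⟩
  -- the orientation of the contraction
  have irrefl_aux : ∀ {a b : V}, H.dir a b → Quotient.mk s a = Quotient.mk s b → False := by
    intro a b hd hq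
    have : s.r a b := Quotient.exact hq
    exact hTA a b hd (hclassRw (s.symm this))
  have antisym_aux : ∀ {a b c d : V}, H.dir a b → H.dir c d →
      Quotient.mk s b = Quotient.mk s c → Quotient.mk s d = Quotient.mk s a → False := by
    intro a b c d hab hcd hbc hda
    have h1 : Relation.ReflTransGen (Rw H) b c := hclassRw (Quotient.exact hbc)
    have h2 : Relation.ReflTransGen (Rw H) d a := hclassRw (Quotient.exact hda)
    have hstep : Rw H c d := ⟨H.dir_adj _ _ hcd, H.not_both _ _ hcd⟩
    exact hTA a b hab ((h1.tail hstep).trans h2)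
  set O : GraphOrientation (contractGraph G s) :=
    { rel := fun C D => ∃ a b : V, Quotient.mk s a = C ∧ Quotient.mk s b = D ∧ H.dir a b
      sub := by
        rintro C D ⟨a, b, ha, hb, hd⟩
        refine ⟨?_, a, b, ha, hb, H.dir_adj _ _ hd⟩
        intro hCD
        exact irrefl_aux hd (by rw [ha, hb, hCD])
      exactlyOne := by
        rintro C D ⟨hne, x, y, hx, hy, hxy⟩
        constructor
        · rintro ⟨a, b, ha, hb, hab⟩ ⟨c, d, hc, hd, hcd⟩
          exact antisym_aux hab hcd (by rw [hb, hc]) (by rw [hd, ha])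
        · intro hnDC
          by_cases h1 : H.dir x y
          · exact ⟨x, y, hx, hy, h1⟩
          by_cases h2 : H.dir y x
          · exact absurd ⟨y, x, hy, hx, h2⟩ hnDC
          · exfalso
            have : s.r x y := Relation.ReflTransGen.single ⟨hxy, h1, h2⟩
            exact hne (by rw [← hx, ← hy]; exact Quotient.sound this) } with hO_def
  have hO : AcyclicO O := by
    rintro C D ⟨a, b, ha, hb, hab⟩ hrt
    have lift : ∀ E, Relation.ReflTransGen O.rel D E →
        ∀ d e : V, Quotient.mk s d = D → Quotient.mk s e = E →
          Relation.ReflTransGen (Rw H) d e := by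
      intro E hDE
      induction hDE with
      | refl =>
          intro d e hd he
          exact hclassRw (Quotient.exact (by rw [hd, he]))
      | tail _ hstep ih =>
          intro d e hd he
          obtain ⟨u, w, hu, hw, huw⟩ := hstep
          have h1 : Relation.ReflTransGen (Rw H) d u := ih d u hd hu
          have h2 : Rw H u w := ⟨H.dir_adj _ _ huw, H.not_both _ _ huw⟩
          have h3 : Relation.ReflTransGen (Rw H) w e :=
            hclassRw (Quotient.exact (by rw [hw, he]))
          exact (h1.tail h2).trans h3
    exact hTA a b hab (lift C hrt b a hb ha)
  refine ⟨⟨⟨s, hs⟩, ⟨O, hO⟩⟩, ?_⟩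
  apply Subtype.ext
  apply PO_ext
  funext v w
  apply propext
  constructor
  · rintro ⟨hadj, a, b, ha, hb, hab⟩
    by_cases h1 : H.dir v w
    · exact h1
    by_cases h2 : H.dir w v
    · exact (antisym_aux h2 hab ha.symm hb).elim
    · exfalso
      have : s.r v w := Relation.ReflTransGen.single ⟨hadj, h1, h2⟩
      have hq : Quotient.mk s v = Quotient.mk s w := Quotient.sound this
      exact irrefl_aux hab (by rw [ha, hb, hq])
  · intro h
    exact ⟨H.dir_adj _ _ h, v, w, rfl, rfl, h⟩

end CTAPO


/-- The totally acyclic partial orientations of G are in bijection with pairs of a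
partition of V(G) into connected classes together with an acyclic orientation of the
contraction, hence their counts agree. -/
theorem card_totally_acyclic_partial_orientations {V : Type} [Fintype V]
    (G : SimpleGraph V) :
    Nat.card {H : PartialOrientation G // TotallyAcyclic H} =
      Nat.card (Σ s : {s : Setoid V // ConnClasses G s},
        {O : GraphOrientation (contractGraph G s.1) // AcyclicO O}) := by
  exact (Nat.card_eq_of_bijective (CTAPO.toPO G)
    ⟨CTAPO.toPO_injective G, CTAPO.toPO_surjective G⟩).symm
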